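/- Let D be a subspace of W and let P denote the orthogonal projection of V onto D. Then there exists a constant λ ∈ [0, 1] such that (P∘T)((P∘T) x) = -λ·x for every x ∈ D if and only if there exists θ ∈ [0, π/2] such that ‖P(J x)‖ = (cos θ)·‖x‖ for every x ∈ D; moreover, in this case λ = cos² θ. (Characterization of pointwise slant distributions: a distribution D contained in the tangent space W is pointwise slant with slant function value θ exactly when (PT)² = -(cos² θ)·id on D.) -/

import Mathlib

open Real RealInnerProductSpace

/-! A skew-adjoint operator `A` satisfies `‖A x‖² = -⟪A² x, x⟫`, so `A² = -λ` forces
`‖A x‖² = λ ‖x‖²`. Conversely, `A² + λ` is symmetric with vanishing quadratic form, hence zero.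
The compression `P ∘ J` of the almost complex structure to `D` is skew-adjoint and agrees with
`P ∘ T` on `D`, because `D ≤ W`; finally `λ ∈ [0, 1]` is exactly `cos² θ` for some `θ ∈ [0, π/2]`. -/

theorem Real.exists_mem_Icc_cos_sq_eq {l : ℝ} (hl : l ∈ Set.Icc (0 : ℝ) 1) :
    ∃ θ ∈ Set.Icc 0 (π / 2), cos θ ^ 2 = l := by
  have hsqrt : √l ≤ 1 := sqrt_le_one.mpr hl.2
  refine ⟨arccos √l, ⟨arccos_nonneg _, arccos_le_pi_div_two.mpr (sqrt_nonneg l)⟩, ?_⟩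
  rw [cos_arccos (by linarith [sqrt_nonneg l]) hsqrt, sq_sqrt hl.1]

theorem norm_eq_mul_norm_iff_sq {E F : Type*} [SeminormedAddCommGroup E]
    [SeminormedAddCommGroup F] {a : ℝ} (ha : 0 ≤ a) (y : E) (x : F) :
    ‖y‖ = a * ‖x‖ ↔ ‖y‖ ^ 2 = a ^ 2 * ‖x‖ ^ 2 := by
  rw [← mul_pow, pow_left_inj₀ (norm_nonneg y) (mul_nonneg ha (norm_nonneg x)) two_ne_zero]

theorem LinearIsometry.inner_map_left_eq_neg_of_map_map_eq_neg {V : Type*}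
    [NormedAddCommGroup V] [InnerProductSpace ℝ V] {J : V →ₗᵢ[ℝ] V}
    (hJ : ∀ x, J (J x) = -x) (x y : V) : ⟪J x, y⟫ = -⟪x, J y⟫ := by
  rw [← J.inner_map_map x (J y), hJ, inner_neg_right, neg_neg]

namespace LinearMap

variable {E : Type*} [NormedAddCommGroup E] [InnerProductSpace ℝ E] {A : E →ₗ[ℝ] E}

theorem isSymmetric_comp_self_of_skew (hA : ∀ x y, ⟪A x, y⟫ = -⟪x, A y⟫) :
    (A ∘ₗ A).IsSymmetric := fun x y => by
  rw [comp_apply, comp_apply, hA (A x) y, hA x (A y), neg_neg]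

theorem norm_sq_eq_neg_inner_apply_apply_of_skew (hA : ∀ x y, ⟪A x, y⟫ = -⟪x, A y⟫) (x : E) :
    ‖A x‖ ^ 2 = -⟪A (A x), x⟫ := by
  rw [hA, neg_neg, real_inner_self_eq_norm_sq]

theorem apply_apply_eq_neg_smul_iff_of_skew (hA : ∀ x y, ⟪A x, y⟫ = -⟪x, A y⟫) (c : ℝ) :
    (∀ x, A (A x) = -c • x) ↔ ∀ x, ‖A x‖ ^ 2 = c * ‖x‖ ^ 2 := by
  simp_rw [norm_sq_eq_neg_inner_apply_apply_of_skew hA]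
  refine ⟨fun h x => ?_, fun h => ?_⟩
  · rw [h, inner_smul_left, real_inner_self_eq_norm_sq]
    simp
  · have hsymm : (A ∘ₗ A + c • LinearMap.id).IsSymmetric :=
      (isSymmetric_comp_self_of_skew hA).add (IsSymmetric.id.smul (conj_trivial c))
    have hzero := hsymm.inner_map_self_eq_zero.mp fun x => by
      rw [add_apply, comp_apply, smul_apply, id_apply, inner_add_left, real_inner_smul_left,
        real_inner_self_eq_norm_sq, ← h x, add_neg_cancel]
    intro x
    rw [neg_smul, eq_neg_iff_add_eq_zero]
    simpa using LinearMap.congr_fun hzero x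

end LinearMap

namespace Submodule

variable {V : Type*} [NormedAddCommGroup V] [InnerProductSpace ℝ V]
  (D : Submodule ℝ V) [D.HasOrthogonalProjection]

noncomputable def compression (f : V →ₗ[ℝ] V) : D →ₗ[ℝ] D :=
  D.orthogonalProjectionOnto.toLinearMap ∘ₗ f ∘ₗ D.subtype

@[simp]
theorem compression_apply (f : V →ₗ[ℝ] V) (x : D) :
    D.compression f x = D.orthogonalProjectionOnto (f x) :=
  rfl

theorem compression_skew {f : V →ₗ[ℝ] V} (hf : ∀ x y, ⟪f x, y⟫ = -⟪x, f y⟫) (x y : D) :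
    ⟪D.compression f x, y⟫ = -⟪x, D.compression f y⟫ := by
  simp only [compression_apply, inner_orthogonalProjectionOnto_eq_of_mem_right,
    inner_orthogonalProjectionOnto_eq_of_mem_left]
  exact hf x y

end Submodule

theorem pointwise_slant_distribution_characterization_general
    {V : Type*} [NormedAddCommGroup V] [InnerProductSpace ℝ V]
    (J : V →ₗᵢ[ℝ] V)
    (hJ2 : ∀ x : V, J (J x) = -x)
    (W : Submodule ℝ V) [FiniteDimensional ℝ W]
    (T : V → V) (hT : ∀ x : V, T x = (W.orthogonalProjection (J x) : V))
    (D : Submodule ℝ V) [FiniteDimensional ℝ D] (hD : D ≤ W)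
    (PT : V → V) (hPT : ∀ x : V, PT x = (D.orthogonalProjection (T x) : V)) :
    ((∃ l ∈ Set.Icc (0 : ℝ) 1, ∀ x ∈ D, PT (PT x) = (-l) • x) ↔
      (∃ θ ∈ Set.Icc 0 (π / 2),
        ∀ x ∈ D, ‖(D.orthogonalProjection (J x) : V)‖ = Real.cos θ * ‖x‖)) ∧
    (∀ l ∈ Set.Icc (0 : ℝ) 1, (∀ x ∈ D, PT (PT x) = (-l) • x) →
      ∃ θ ∈ Set.Icc 0 (π / 2),
        (∀ x ∈ D, ‖(D.orthogonalProjection (J x) : V)‖ = Real.cos θ * ‖x‖) ∧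
          l = Real.cos θ ^ 2) := by
  set A := D.compression J.toLinearMap
  have hPT_eq (x : V) : PT x = D.orthogonalProjectionOnto (J x) := by
    rw [hPT, hT]
    exact congrArg Subtype.val (Submodule.orthogonalProjectionOnto_starProjection_of_le hD (J x))
  have hsq (l : ℝ) : (∀ x ∈ D, PT (PT x) = (-l) • x) ↔ ∀ x : D, A (A x) = (-l) • x := by
    simp [Subtype.ext_iff, hPT_eq, A]
  have hnorm (θ : ℝ) (hθ : θ ∈ Set.Icc 0 (π / 2)) :
      (∀ x ∈ D, ‖(D.orthogonalProjectionOnto (J x) : V)‖ = cos θ * ‖x‖) ↔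
        ∀ x : D, ‖A x‖ ^ 2 = cos θ ^ 2 * ‖x‖ ^ 2 := by
    have hcos : 0 ≤ cos θ := cos_nonneg_of_mem_Icc ⟨by linarith [hθ.1, pi_pos], hθ.2⟩
    simp [norm_eq_mul_norm_iff_sq hcos, A]
  have hA := LinearMap.apply_apply_eq_neg_smul_iff_of_skew
    (D.compression_skew (LinearIsometry.inner_map_left_eq_neg_of_map_map_eq_neg hJ2))
  have slant_of_sq (l : ℝ) (hl : l ∈ Set.Icc (0 : ℝ) 1) (h : ∀ x ∈ D, PT (PT x) = (-l) • x) :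
      ∃ θ ∈ Set.Icc 0 (π / 2),
        (∀ x ∈ D, ‖(D.orthogonalProjectionOnto (J x) : V)‖ = cos θ * ‖x‖) ∧ l = cos θ ^ 2 := by
    obtain ⟨θ, hθ, rfl⟩ := exists_mem_Icc_cos_sq_eq hl
    exact ⟨θ, hθ, (hnorm θ hθ).mpr ((hA _).mp ((hsq _).mp h)), rfl⟩
  refine ⟨⟨fun ⟨l, hl, h⟩ => ?_, fun ⟨θ, hθ, h⟩ => ?_⟩, slant_of_sq⟩
  · obtain ⟨θ, hθ, hslant, -⟩ := slant_of_sq l hl h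
    exact ⟨θ, hθ, hslant⟩
  · exact ⟨cos θ ^ 2, ⟨sq_nonneg _, cos_sq_le_one θ⟩, (hsq _).mpr ((hA _).mpr ((hnorm θ hθ).mp h))⟩

/-- **Characterization of pointwise slant distributions.**
Let `D ≤ W` and let `P` be the orthogonal projection onto `D`.  Then there is a constant
`λ ∈ [0,1]` with `(P∘T)((P∘T) x) = -λ • x` for all `x ∈ D` iff there is `θ ∈ [0, π/2]`
with `‖P (J x)‖ = (cos θ)·‖x‖` for all `x ∈ D`; moreover in that case `λ = cos² θ`. -/
theorem pointwise_slant_distribution_characterization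
    {V : Type*} [NormedAddCommGroup V] [InnerProductSpace ℝ V]
    (J : V →ₗᵢ[ℝ] V) (hJsurj : Function.Surjective J)
    (hJ2 : ∀ x : V, J (J x) = -x)
    (W : Submodule ℝ V) [FiniteDimensional ℝ W]
    (T : V → V) (hT : ∀ x : V, T x = (W.orthogonalProjection (J x) : V))
    (D : Submodule ℝ V) [FiniteDimensional ℝ D] (hD : D ≤ W)
    (PT : V → V) (hPT : ∀ x : V, PT x = (D.orthogonalProjection (T x) : V)) :
    ((∃ l ∈ Set.Icc (0 : ℝ) 1, ∀ x ∈ D, PT (PT x) = (-l) • x) ↔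
      (∃ θ ∈ Set.Icc 0 (π / 2),
        ∀ x ∈ D, ‖(D.orthogonalProjection (J x) : V)‖ = Real.cos θ * ‖x‖)) ∧
    (∀ l ∈ Set.Icc (0 : ℝ) 1, (∀ x ∈ D, PT (PT x) = (-l) • x) →
      ∃ θ ∈ Set.Icc 0 (π / 2),
        (∀ x ∈ D, ‖(D.orthogonalProjection (J x) : V)‖ = Real.cos θ * ‖x‖) ∧
          l = Real.cos θ ^ 2) :=
  pointwise_slant_distribution_characterization_general J hJ2 W T hT D hD PT hPT
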